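/- arXiv:2207.06364 — 7 statements merged into one kernel-verified Lean document; each statement's English description precedes it below -/
import Mathlib

section
/- Duality of the extended target: with π(dy) = w(y)λ(dy)/λ(w), Λ_N(y, dx¹:ᴺ) = N⁻¹ Σᵢ δ_y(dxⁱ) Πⱼ≠ᵢ λ(dxʲ), 𝛑_N(dx¹:ᴺ) = λ(w)⁻¹ (N⁻¹Σᵢ w(xⁱ)) Πⱼ λ(dxʲ), and Φ_N(x¹:ᴺ, dy) = Σᵢ (w(xⁱ)/Σⱼ w(xʲ)) δ_{xⁱ}(dy), the two disintegrations coincide: π(dy) Λ_N(y, dx¹:ᴺ) = 𝛑_N(dx¹:ᴺ) Φ_N(x¹:ᴺ, dy) as measures on X^{N+1}. -/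
open MeasureTheory Function Set

/-- Pushing forward `lam ⊗ lam^N` by `(y, x) ↦ update x i y` gives `lam^N`. -/
lemma map_update_pi {X : Type*} [MeasurableSpace X]
    (lam : Measure X) [IsProbabilityMeasure lam] {N : ℕ} (i : Fin N) :
    Measure.map (fun p : X × (Fin N → X) => Function.update p.2 i p.1)
      (lam.prod (Measure.pi fun _ => lam)) = Measure.pi fun _ => lam := by
  have hm : Measurable (fun p : X × (Fin N → X) => Function.update p.2 i p.1) :=
    measurable_update'.comp (measurable_snd.prodMk measurable_fst)
  refine (Measure.pi_eq (μ := fun _ : Fin N => lam) fun s hs => ?_).symm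
  rw [Measure.map_apply hm (MeasurableSet.univ_pi fun j => hs j)]
  have hpre : (fun p : X × (Fin N → X) => Function.update p.2 i p.1) ⁻¹'
      (Set.pi univ s) = s i ×ˢ (Set.pi univ (Function.update s i univ)) := by
    ext ⟨y, x⟩
    simp only [Set.mem_preimage, Set.mem_pi, Set.mem_univ, forall_true_left, Set.mem_prod]
    constructor
    · intro h
      refine ⟨by simpa using h i, fun j => ?_⟩
      rcases eq_or_ne j i with rfl | hj
      · simp
      · simpa [Function.update_of_ne hj] using h j
    · rintro ⟨h1, h2⟩ j
      rcases eq_or_ne j i with rfl | hj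
      · simpa using h1
      · have := h2 j
        simpa [Function.update_of_ne hj] using this
  rw [hpre, Measure.prod_prod, Measure.pi_pi]
  have : ∏ j, lam (Function.update s i univ j)
      = ∏ j, (Function.update (fun j => lam (s j)) i 1) j := by
    refine Finset.prod_congr rfl fun j _ => ?_
    rcases eq_or_ne j i with rfl | hj
    · simp
    · simp [Function.update_of_ne hj]
  rw [this, Finset.prod_update_of_mem (Finset.mem_univ i), one_mul,
    show (Finset.univ \ {i}) = Finset.univ.erase i from by simp [Finset.erase_eq]]
  exact Finset.mul_prod_erase Finset.univ (fun j => lam (s j)) (Finset.mem_univ i)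

section aux

/-- The integrand `(y, x) ↦ w y * F y (update x i y)` is integrable on the product. -/
lemma g_integrable {X : Type*} [MeasurableSpace X] (lam : Measure X) [IsProbabilityMeasure lam]
    (w : X → ℝ) (hwm : Measurable w) (hw0 : ∀ x, 0 < w x) (hwint : Integrable w lam)
    {N : ℕ} (F : X → (Fin N → X) → ℝ) (hFm : Measurable (Function.uncurry F))
    (C : ℝ) (hFbdd : ∀ y x, |F y x| ≤ C) (i : Fin N) :
    Integrable (fun p : X × (Fin N → X) => w p.1 * F p.1 (Function.update p.2 i p.1))
      (lam.prod (Measure.pi fun _ => lam)) := by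
  have hupd : Measurable (fun p : X × (Fin N → X) => Function.update p.2 i p.1) :=
    measurable_update'.comp (measurable_snd.prodMk measurable_fst)
  have hg : Measurable
      (fun p : X × (Fin N → X) => w p.1 * F p.1 (Function.update p.2 i p.1)) :=
    (hwm.comp measurable_fst).mul (hFm.comp (measurable_fst.prodMk hupd))
  have hwfst : Integrable (fun p : X × (Fin N → X) => w p.1)
      (lam.prod (Measure.pi fun _ => lam)) := by
    have hmap : (lam.prod (Measure.pi fun _ : Fin N => lam)).map Prod.fst = lam := by
      rw [Measure.map_fst_prod]; simp
    have := hwint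
    rw [← hmap] at this
    exact (integrable_map_measure hwm.aestronglyMeasurable
      measurable_fst.aemeasurable).mp this
  refine Integrable.mono' (hwfst.const_mul C) hg.aestronglyMeasurable
    (Filter.Eventually.of_forall fun p => ?_)
  rw [Real.norm_eq_abs, abs_mul, abs_of_pos (hw0 _)]
  calc w p.1 * |F p.1 (Function.update p.2 i p.1)| ≤ w p.1 * C :=
        mul_le_mul_of_nonneg_left (hFbdd _ _) (hw0 _).le
    _ = C * w p.1 := mul_comm _ _

/-- Key duality identity for a single index `i`. -/
lemma key_identity {X : Type*} [MeasurableSpace X] (lam : Measure X) [IsProbabilityMeasure lam]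
    (w : X → ℝ) (hwm : Measurable w) (hw0 : ∀ x, 0 < w x) (hwint : Integrable w lam)
    {N : ℕ} (F : X → (Fin N → X) → ℝ) (hFm : Measurable (Function.uncurry F))
    (C : ℝ) (hFbdd : ∀ y x, |F y x| ≤ C) (i : Fin N) :
    ∫ y, w y * ∫ x : Fin N → X, F y (Function.update x i y)
        ∂(Measure.pi fun _ => lam) ∂lam
      = ∫ x : Fin N → X, w (x i) * F (x i) x ∂(Measure.pi fun _ => lam) := by
  have hupd : Measurable (fun p : X × (Fin N → X) => Function.update p.2 i p.1) :=
    measurable_update'.comp (measurable_snd.prodMk measurable_fst)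
  have hh : Measurable (fun x : Fin N → X => w (x i) * F (x i) x) :=
    (hwm.comp (measurable_pi_apply i)).mul
      (hFm.comp ((measurable_pi_apply i).prodMk measurable_id :
        Measurable fun x : Fin N → X => (x i, x)))
  have hgint := g_integrable lam w hwm hw0 hwint F hFm C hFbdd i
  have e1 : ∫ x : Fin N → X, w (x i) * F (x i) x ∂(Measure.pi fun _ => lam)
      = ∫ p : X × (Fin N → X), w p.1 * F p.1 (Function.update p.2 i p.1)
          ∂(lam.prod (Measure.pi fun _ => lam)) := by
    calc ∫ x : Fin N → X, w (x i) * F (x i) x ∂(Measure.pi fun _ => lam)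
        = ∫ x : Fin N → X, w (x i) * F (x i) x
            ∂(Measure.map (fun p : X × (Fin N → X) => Function.update p.2 i p.1)
              (lam.prod (Measure.pi fun _ => lam))) := by rw [map_update_pi]
      _ = ∫ p : X × (Fin N → X), w p.1 * F p.1 (Function.update p.2 i p.1)
            ∂(lam.prod (Measure.pi fun _ => lam)) := by
          rw [integral_map hupd.aemeasurable hh.aestronglyMeasurable]
          refine integral_congr_ae (Filter.Eventually.of_forall fun p => ?_)
          simp
  rw [e1, integral_prod _ hgint]
  refine integral_congr_ae (Filter.Eventually.of_forall fun y => ?_)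
  exact (integral_const_mul _ _).symm

/-- Integrability of `x ↦ w (x i) * F (x i) x` w.r.t. the product measure. -/
lemma h_integrable {X : Type*} [MeasurableSpace X] (lam : Measure X) [IsProbabilityMeasure lam]
    (w : X → ℝ) (hwm : Measurable w) (hw0 : ∀ x, 0 < w x) (hwint : Integrable w lam)
    {N : ℕ} (F : X → (Fin N → X) → ℝ) (hFm : Measurable (Function.uncurry F))
    (C : ℝ) (hFbdd : ∀ y x, |F y x| ≤ C) (i : Fin N) :
    Integrable (fun x : Fin N → X => w (x i) * F (x i) x) (Measure.pi fun _ => lam) := by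
  have hupd : Measurable (fun p : X × (Fin N → X) => Function.update p.2 i p.1) :=
    measurable_update'.comp (measurable_snd.prodMk measurable_fst)
  have hh : Measurable (fun x : Fin N → X => w (x i) * F (x i) x) :=
    (hwm.comp (measurable_pi_apply i)).mul
      (hFm.comp ((measurable_pi_apply i).prodMk measurable_id :
        Measurable fun x : Fin N → X => (x i, x)))
  have hgint := g_integrable lam w hwm hw0 hwint F hFm C hFbdd i
  rw [← map_update_pi lam i,
    integrable_map_measure hh.aestronglyMeasurable hupd.aemeasurable]
  refine hgint.congr (Filter.Eventually.of_forall fun p => ?_)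
  simp

end aux

/-- Duality of the extended target: `π(dy) Λ_N(y, dx¹:ᴺ) = 𝛑_N(dx¹:ᴺ) Φ_N(x¹:ᴺ, dy)`,
expressed through integration of an arbitrary bounded measurable function `F` on
`X × X^N`. -/
theorem duality_extended_target
    {X : Type*} [MeasurableSpace X] (lam : Measure X) [IsProbabilityMeasure lam]
    (w : X → ℝ) (hwm : Measurable w) (hw0 : ∀ x, 0 < w x) (hwint : Integrable w lam)
    (N : ℕ) (hN : 1 ≤ N)
    (F : X → (Fin N → X) → ℝ) (hFm : Measurable (Function.uncurry F))
    (C : ℝ) (hFbdd : ∀ y x, |F y x| ≤ C) :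
    ∫ y, (w y / ∫ z, w z ∂lam) *
        ((N : ℝ)⁻¹ * ∑ i, ∫ x : Fin N → X, F y (Function.update x i y)
            ∂(Measure.pi fun _ => lam)) ∂lam
      =
    ∫ x : Fin N → X,
        (((N : ℝ)⁻¹ * ∑ i, w (x i)) / ∫ z, w z ∂lam) *
          (∑ i, (w (x i) / ∑ j, w (x j)) * F (x i) x)
        ∂(Measure.pi fun _ => lam) := by
  classical
  set P : Measure (Fin N → X) := Measure.pi fun _ : Fin N => lam with hPdef
  set c : ℝ := ∫ z, w z ∂lam with hc
  have hupd : ∀ i : Fin N,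
      Measurable (fun p : X × (Fin N → X) => F p.1 (Function.update p.2 i p.1)) :=
    fun i => hFm.comp (measurable_fst.prodMk
      (measurable_update'.comp (measurable_snd.prodMk measurable_fst)))
  -- left-hand side
  have hL : ∀ y, (w y / c) * ((N : ℝ)⁻¹ * ∑ i, ∫ x : Fin N → X,
        F y (Function.update x i y) ∂P)
      = ∑ i, (c⁻¹ * (N : ℝ)⁻¹) *
          (w y * ∫ x : Fin N → X, F y (Function.update x i y) ∂P) := by
    intro y
    rw [Finset.mul_sum, Finset.mul_sum]
    exact Finset.sum_congr rfl fun i _ => by ring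
  have hLint : ∀ i : Fin N, Integrable (fun y => (c⁻¹ * (N : ℝ)⁻¹) *
      (w y * ∫ x : Fin N → X, F y (Function.update x i y) ∂P)) lam := by
    intro i
    refine Integrable.const_mul ?_ _
    have hI : StronglyMeasurable
        (fun y => ∫ x : Fin N → X, F y (Function.update x i y) ∂P) :=
      (hupd i).stronglyMeasurable.integral_prod_right'
    refine Integrable.mono' (hwint.const_mul C)
      (hwm.aestronglyMeasurable.mul hI.aestronglyMeasurable)
      (Filter.Eventually.of_forall fun y => ?_)
    rw [Real.norm_eq_abs, abs_mul, abs_of_pos (hw0 _)]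
    have hIb : |∫ x : Fin N → X, F y (Function.update x i y) ∂P| ≤ C := by
      rw [← Real.norm_eq_abs]
      calc ‖∫ x : Fin N → X, F y (Function.update x i y) ∂P‖
          ≤ C * (P Set.univ).toReal := norm_integral_le_of_norm_le_const
            (Filter.Eventually.of_forall fun x => by
              rw [Real.norm_eq_abs]; exact hFbdd _ _)
        _ = C := by simp
    calc w y * |∫ x : Fin N → X, F y (Function.update x i y) ∂P| ≤ w y * C :=
          mul_le_mul_of_nonneg_left hIb (hw0 _).le
      _ = C * w y := mul_comm _ _
  -- right-hand side pointwise rewriting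
  have hRp : ∀ x : Fin N → X,
      (((N : ℝ)⁻¹ * ∑ i, w (x i)) / c) * (∑ i, (w (x i) / ∑ j, w (x j)) * F (x i) x)
        = ∑ i, (c⁻¹ * (N : ℝ)⁻¹) * (w (x i) * F (x i) x) := by
    intro x
    have hS : (∑ j, w (x j)) ≠ 0 :=
      ne_of_gt (Finset.sum_pos (fun j _ => hw0 _) ⟨⟨0, hN⟩, Finset.mem_univ _⟩)
    rw [Finset.mul_sum]
    refine Finset.sum_congr rfl fun i _ => ?_
    rw [div_eq_mul_inv, div_eq_mul_inv,
      show (N : ℝ)⁻¹ * (∑ i, w (x i)) * c⁻¹ * (w (x i) * (∑ j, w (x j))⁻¹ * F (x i) x)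
        = ((∑ j, w (x j)) * (∑ j, w (x j))⁻¹) * ((c⁻¹ * (N : ℝ)⁻¹) * (w (x i) * F (x i) x))
        from by ring, mul_inv_cancel₀ hS, one_mul]
  have hRint : ∀ i : Fin N,
      Integrable (fun x : Fin N → X => (c⁻¹ * (N : ℝ)⁻¹) * (w (x i) * F (x i) x)) P :=
    fun i => (h_integrable lam w hwm hw0 hwint F hFm C hFbdd i).const_mul _
  calc ∫ y, (w y / c) * ((N : ℝ)⁻¹ * ∑ i, ∫ x : Fin N → X,
          F y (Function.update x i y) ∂P) ∂lam
      = ∫ y, ∑ i, (c⁻¹ * (N : ℝ)⁻¹) *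
          (w y * ∫ x : Fin N → X, F y (Function.update x i y) ∂P) ∂lam := by
        simp only [hL]
    _ = ∑ i, ∫ y, (c⁻¹ * (N : ℝ)⁻¹) *
          (w y * ∫ x : Fin N → X, F y (Function.update x i y) ∂P) ∂lam :=
        integral_finset_sum _ fun i _ => hLint i
    _ = ∑ i, (c⁻¹ * (N : ℝ)⁻¹) *
          ∫ y, w y * ∫ x : Fin N → X, F y (Function.update x i y) ∂P ∂lam := by
        simp only [integral_const_mul]
    _ = ∑ i, (c⁻¹ * (N : ℝ)⁻¹) * ∫ x : Fin N → X, w (x i) * F (x i) x ∂P := by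
        refine Finset.sum_congr rfl fun i _ => ?_
        rw [key_identity lam w hwm hw0 hwint F hFm C hFbdd i]
    _ = ∑ i, ∫ x : Fin N → X, (c⁻¹ * (N : ℝ)⁻¹) * (w (x i) * F (x i) x) ∂P := by
        simp only [integral_const_mul]
    _ = ∫ x : Fin N → X, ∑ i, (c⁻¹ * (N : ℝ)⁻¹) * (w (x i) * F (x i) x) ∂P :=
        (integral_finset_sum _ fun i _ => hRint i).symm
    _ = ∫ x : Fin N → X,
          (((N : ℝ)⁻¹ * ∑ i, w (x i)) / c) * (∑ i, (w (x i) / ∑ j, w (x j)) * F (x i) x) ∂P := by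
        simp only [hRp]
end

section
/- Let U₁,…,Uₙ ≥ 0 and V₁,…,Vₙ be random variables (possibly dependent), Âₙ = n⁻¹Σ UᵢVᵢ, B̂ₙ = n⁻¹Σ Uᵢ, a = E[Âₙ], b = E[B̂ₙ] > 0, r = a/b. If |Âₙ/B̂ₙ| ≤ 1 almost surely, then |E[Âₙ/B̂ₙ] − r| ≤ (2b²)⁻¹ (3·E[(B̂ₙ − b)²] + E[(Âₙ − a)²]). -/
/-!
Subtracting the first-order (delta-method) linearization `(Â - a)/b - a (B̂ - b)/b²` of `Â/B̂`
around `(a, b)`, which has mean zero, leaves the remainder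
`(Â/B̂)(B̂ - b)²/b² - (Â - a)(B̂ - b)/b²`. With `|Â/B̂| ≤ 1` and `|xy| ≤ (x² + y²)/2` this
remainder is pointwise at most `(2b²)⁻¹ (3 (B̂ - b)² + (Â - a)²)`; integrate.
-/

open MeasureTheory

lemma div_sub_div_sub_linear_eq {A B a b : ℝ} (hB : B ≠ 0) (hb : b ≠ 0) :
    A / B - a / b - ((A - a) / b - a * (B - b) / b ^ 2)
      = (A / B * (B - b) ^ 2 - (A - a) * (B - b)) / b ^ 2 := by
  field_simp
  ring

lemma abs_mul_sq_sub_mul_le {r x y : ℝ} (hr : |r| ≤ 1) :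
    |r * y ^ 2 - x * y| ≤ (3 * y ^ 2 + x ^ 2) / 2 := by
  have hry : |r * y ^ 2| ≤ y ^ 2 := by
    rw [abs_mul, abs_of_nonneg (sq_nonneg y)]
    exact mul_le_of_le_one_left (sq_nonneg y) hr
  have hxy : |x * y| ≤ (x ^ 2 + y ^ 2) / 2 := by
    rw [abs_mul]
    nlinarith [sq_nonneg (|x| - |y|), sq_abs x, sq_abs y]
  calc |r * y ^ 2 - x * y| ≤ |r * y ^ 2| + |x * y| := abs_sub _ _
    _ ≤ (3 * y ^ 2 + x ^ 2) / 2 := by linarith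

lemma abs_div_sub_div_sub_linear_le {A B a b : ℝ} (hB : B ≠ 0) (hb : b ≠ 0)
    (hratio : |A / B| ≤ 1) :
    |A / B - a / b - ((A - a) / b - a * (B - b) / b ^ 2)|
      ≤ (2 * b ^ 2)⁻¹ * (3 * (B - b) ^ 2 + (A - a) ^ 2) := by
  rw [div_sub_div_sub_linear_eq hB hb, abs_div, abs_of_nonneg (sq_nonneg b)]
  calc |A / B * (B - b) ^ 2 - (A - a) * (B - b)| / b ^ 2
      ≤ (3 * (B - b) ^ 2 + (A - a) ^ 2) / 2 / b ^ 2 := by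
        gcongr
        exact abs_mul_sq_sub_mul_le hratio
    _ = (2 * b ^ 2)⁻¹ * (3 * (B - b) ^ 2 + (A - a) ^ 2) := by
        field_simp

section

variable {Ω : Type*} [MeasurableSpace Ω] {μ : Measure Ω} [IsProbabilityMeasure μ]
  {A B : Ω → ℝ} {a b : ℝ}

lemma integral_sub_mean_eq_zero {X : Ω → ℝ} {c : ℝ} (hX : Integrable X μ)
    (hc : c = ∫ ω, X ω ∂μ) :
    ∫ ω, (X ω - c) ∂μ = 0 := by
  rw [integral_sub hX (integrable_const c), integral_const, ← hc]
  simp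

lemma integrable_ratio_linearization (hA : Integrable A μ) (hB : Integrable B μ) :
    Integrable (fun ω => (A ω - a) / b - a * (B ω - b) / b ^ 2) μ :=
  ((hA.sub (integrable_const a)).div_const b).sub
    (((hB.sub (integrable_const b)).const_mul a).div_const _)

lemma integral_ratio_linearization_eq_zero (hA : Integrable A μ) (hB : Integrable B μ)
    (ha : a = ∫ ω, A ω ∂μ) (hb : b = ∫ ω, B ω ∂μ) :
    ∫ ω, ((A ω - a) / b - a * (B ω - b) / b ^ 2) ∂μ = 0 := by
  rw [integral_sub (f := fun ω => (A ω - a) / b) (g := fun ω => a * (B ω - b) / b ^ 2)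
      ((hA.sub (integrable_const a)).div_const b)
      (((hB.sub (integrable_const b)).const_mul a).div_const _),
    integral_div, integral_div, integral_const_mul,
    integral_sub_mean_eq_zero hA ha, integral_sub_mean_eq_zero hB hb]
  simp

lemma integral_div_sub_div_eq_integral_remainder (hR : Integrable (fun ω => A ω / B ω) μ)
    (hA : Integrable A μ) (hB : Integrable B μ)
    (ha : a = ∫ ω, A ω ∂μ) (hb : b = ∫ ω, B ω ∂μ) :
    (∫ ω, A ω / B ω ∂μ) - a / b
      = ∫ ω, (A ω / B ω - a / b - ((A ω - a) / b - a * (B ω - b) / b ^ 2)) ∂μ := by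
  rw [integral_sub (f := fun ω => A ω / B ω - a / b) (hR.sub (integrable_const _))
      (integrable_ratio_linearization hA hB),
    integral_ratio_linearization_eq_zero hA hB ha hb, integral_sub hR (integrable_const _)]
  simp

end

theorem ratio_bias_bound_general
    {Ω : Type*} [MeasurableSpace Ω] (μ : Measure Ω) [IsProbabilityMeasure μ]
    (A B : Ω → ℝ)
    (a b : ℝ) (ha : a = ∫ ω, A ω ∂μ) (hb : b = ∫ ω, B ω ∂μ) (hbpos : 0 < b)
    (hBpos : ∀ᵐ ω ∂μ, 0 < B ω)
    (hratio : ∀ᵐ ω ∂μ, |A ω / B ω| ≤ 1)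
    (hintR : Integrable (fun ω => A ω / B ω) μ)
    (hintA : Integrable A μ) (hintB : Integrable B μ)
    (hintA2 : Integrable (fun ω => (A ω - a) ^ 2) μ)
    (hintB2 : Integrable (fun ω => (B ω - b) ^ 2) μ) :
    |(∫ ω, A ω / B ω ∂μ) - a / b|
      ≤ (2 * b ^ 2)⁻¹ * (3 * (∫ ω, (B ω - b) ^ 2 ∂μ) + ∫ ω, (A ω - a) ^ 2 ∂μ) := by
  have hbound : Integrable
      (fun ω => (2 * b ^ 2)⁻¹ * (3 * (B ω - b) ^ 2 + (A ω - a) ^ 2)) μ :=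
    ((hintB2.const_mul 3).add hintA2).const_mul _
  have hrhs : (2 * b ^ 2)⁻¹ * (3 * (∫ ω, (B ω - b) ^ 2 ∂μ) + ∫ ω, (A ω - a) ^ 2 ∂μ)
      = ∫ ω, (2 * b ^ 2)⁻¹ * (3 * (B ω - b) ^ 2 + (A ω - a) ^ 2) ∂μ := by
    rw [integral_const_mul, integral_add (hintB2.const_mul 3) hintA2, integral_const_mul]
  rw [integral_div_sub_div_eq_integral_remainder hintR hintA hintB ha hb, hrhs,
    ← Real.norm_eq_abs]
  refine norm_integral_le_of_norm_le hbound ?_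
  filter_upwards [hBpos, hratio] with ω hBω hω
  exact abs_div_sub_div_sub_linear_le hBω.ne' hbpos.ne' hω

/-- Bias bound for a ratio estimator: if `|Âₙ/B̂ₙ| ≤ 1` a.s., then
`|E[Âₙ/B̂ₙ] − a/b| ≤ (2b²)⁻¹ (3 E[(B̂ₙ−b)²] + E[(Âₙ−a)²])`. -/
theorem ratio_bias_bound
    {Ω : Type*} [MeasurableSpace Ω] (μ : Measure Ω) [IsProbabilityMeasure μ]
    (n : ℕ) (U V : Fin n → Ω → ℝ)
    (hU0 : ∀ i ω, 0 ≤ U i ω)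
    (A B : Ω → ℝ)
    (hA : A = fun ω => (n : ℝ)⁻¹ * ∑ i, U i ω * V i ω)
    (hB : B = fun ω => (n : ℝ)⁻¹ * ∑ i, U i ω)
    (a b : ℝ) (ha : a = ∫ ω, A ω ∂μ) (hb : b = ∫ ω, B ω ∂μ) (hbpos : 0 < b)
    (hBpos : ∀ᵐ ω ∂μ, 0 < B ω)
    (hratio : ∀ᵐ ω ∂μ, |A ω / B ω| ≤ 1)
    (hintR : Integrable (fun ω => A ω / B ω) μ)
    (hintA : Integrable A μ) (hintB : Integrable B μ)
    (hintA2 : Integrable (fun ω => (A ω - a) ^ 2) μ)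
    (hintB2 : Integrable (fun ω => (B ω - b) ^ 2) μ) :
    |(∫ ω, A ω / B ω ∂μ) - a / b|
      ≤ (2 * b ^ 2)⁻¹ * (3 * (∫ ω, (B ω - b) ^ 2 ∂μ) + ∫ ω, (A ω - a) ^ 2 ∂μ) :=
  ratio_bias_bound_general μ A B a b ha hb hbpos hBpos hratio hintR hintA hintB hintA2 hintB2
end

section
/- Uniform minorization for the i-SIR kernel: assume ω = sup_x w(x)/λ(w) < ∞ and N ≥ 2. Define P_N(x, A) = ∫ Σᵢ (w(xⁱ)/Σⱼw(xʲ)) 1_A(xⁱ) with x¹ = x and x²,…,xᴺ i.i.d. ∼ λ. Then for every x ∈ X and A ∈ 𝒳, P_N(x, A) ≥ ε_N · π(A), where ε_N = (N−1)/(2ω + N − 2) and π(dy) = w(y)λ(dy)/λ(w). -/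
open MeasureTheory ProbabilityTheory Finset

/-! Drop the term of the fixed particle `x₀` and look at a fresh particle `xⁱ ∼ λ`. With
`S = w(x₀) + ∑_{j ≥ 2} w(xʲ)`, the conditional mean of `S` given `xⁱ = y` is
`c(y) = w(x₀) + w(y) + (N - 2) λ(w)`. Jensen for the convex map `s ↦ 1 / s`, applied conditionally
on `xⁱ` through its tangent line `1 / s ≥ 2 / c - s / c²`, gives
`E[w(xⁱ) 1_A(xⁱ) / S] ≥ λ(w 1_A / c)`, and `c ≤ (2ω + N - 2) λ(w)` bounds this below by
`π(A) / (2ω + N - 2)`. Summing over the `N - 1` fresh particles gives `ε_N π(A)`. -/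

theorem two_mul_div_sub_div_sq_mul_le_div {g c s : ℝ} (hg : 0 ≤ g) (hc : 0 < c) (hs : 0 < s) :
    2 * (g / c) - g / c ^ 2 * s ≤ g / s := by
  have h : g / s - (2 * (g / c) - g / c ^ 2 * s) = g * (c - s) ^ 2 / (c ^ 2 * s) := by
    field_simp
    ring
  have : 0 ≤ g * (c - s) ^ 2 / (c ^ 2 * s) := by positivity
  linarith

theorem MeasureTheory.Integrable.div_of_nonneg_of_le {α : Type*} [MeasurableSpace α] {μ : Measure α}
    [IsFiniteMeasure μ] {g c : α → ℝ} (hg : Measurable g) (hc : Measurable c) (hg0 : ∀ x, 0 ≤ g x)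
    (hgc : ∀ x, g x ≤ c x) : Integrable (fun x => g x / c x) μ := by
  refine .of_bound (hg.div hc).aestronglyMeasurable 1 (ae_of_all _ fun x => ?_)
  rw [Real.norm_of_nonneg (div_nonneg (hg0 x) ((hg0 x).trans (hgc x)))]
  exact div_le_one_of_le₀ (hgc x) ((hg0 x).trans (hgc x))

theorem norm_sum_div_sum_mul_le_one {ι : Type*} [Fintype ι] {p q : ι → ℝ} (hp : ∀ i, 0 ≤ p i)
    (hq0 : ∀ i, 0 ≤ q i) (hq1 : ∀ i, q i ≤ 1) : ‖∑ i, (p i / ∑ j, p j) * q i‖ ≤ 1 := by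
  have hpp : ∀ i, 0 ≤ p i / ∑ j, p j := fun i => div_nonneg (hp i) (sum_nonneg fun j _ => hp j)
  rw [Real.norm_of_nonneg (sum_nonneg fun i _ => mul_nonneg (hpp i) (hq0 i))]
  calc ∑ i, (p i / ∑ j, p j) * q i ≤ ∑ i, p i / ∑ j, p j :=
        sum_le_sum fun i _ => mul_le_of_le_one_right (hpp i) (hq1 i)
    _ = (∑ i, p i) / ∑ j, p j := (sum_div _ _ _).symm
    _ ≤ 1 := div_self_le_one _

theorem sum_erase_indicator_div_le_sum_update {ι X : Type*} [Fintype ι] [DecidableEq ι]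
    {w : X → ℝ} (hw0 : ∀ x, 0 ≤ w x) (A : Set X) (v : ι → X) (k : ι) (x₀ : X) :
    ∑ i ∈ univ.erase k, A.indicator w (v i) / (w x₀ + ∑ j ∈ univ.erase k, w (v j))
      ≤ ∑ i, (w (Function.update v k x₀ i) / ∑ j, w (Function.update v k x₀ j)) *
          A.indicator (fun _ => (1 : ℝ)) (Function.update v k x₀ i) := by
  have hsum : ∑ j, w (Function.update v k x₀ j) = w x₀ + ∑ j ∈ univ.erase k, w (v j) := by
    rw [← add_sum_erase _ _ (mem_univ k), Function.update_self]
    exact congrArg _ (sum_congr rfl fun j hj => by rw [Function.update_of_ne (ne_of_mem_erase hj)])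
  rw [hsum, ← add_sum_erase _ _ (mem_univ k)]
  refine le_add_of_nonneg_of_le ?_ (sum_le_sum fun i hi => ?_)
  · rw [Function.update_self]
    have := sum_nonneg fun j (_ : j ∈ univ.erase k) => hw0 (v j)
    exact mul_nonneg (div_nonneg (hw0 x₀) (by linarith [hw0 x₀])) (by simp [Set.indicator_nonneg])
  · rw [Function.update_of_ne (ne_of_mem_erase hi)]
    by_cases h : v i ∈ A <;> simp [h]

section ProductSpace

variable {ι X : Type*} [Fintype ι] [MeasurableSpace X] {μ : Measure X} [IsProbabilityMeasure μ]

theorem integral_mul_comp_eval_pi {i j : ι} (hij : i ≠ j) {f g : X → ℝ}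
    (hf : AEStronglyMeasurable f μ) (hg : AEStronglyMeasurable g μ) :
    ∫ v, f (v i) * g (v j) ∂Measure.pi (fun _ => μ) = (∫ y, f y ∂μ) * ∫ y, g y ∂μ := by
  have hind : IndepFun (fun v : ι → X => v i) (fun v => v j) (Measure.pi fun _ => μ) :=
    (iIndepFun_pi (X := fun _ => id) fun _ => aemeasurable_id).indepFun hij
  rw [hind.integral_fun_comp_mul_comp (measurable_pi_apply i).aemeasurable
    (measurable_pi_apply j).aemeasurable, integral_comp_eval hf, integral_comp_eval hg]
  · convert hf; exact (measurePreserving_eval _ i).map_eq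
  · convert hg; exact (measurePreserving_eval _ j).map_eq

theorem integral_mul_sum_comp_eval_pi {E : Finset ι} {i : ι} (hi : i ∈ E) {f w : X → ℝ} {C : ℝ}
    (hf : AEStronglyMeasurable f μ) (hfC : ∀ y, ‖f y‖ ≤ C) (hw : Integrable w μ) :
    ∫ v, f (v i) * ∑ j ∈ E, w (v j) ∂Measure.pi (fun _ => μ)
      = ∫ y, f y * w y ∂μ + ((#E : ℝ) - 1) * ((∫ y, f y ∂μ) * ∫ y, w y ∂μ) := by
  classical
  have hfi : AEStronglyMeasurable (fun v : ι → X => f (v i)) (Measure.pi fun _ => μ) :=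
    hf.comp_measurePreserving (measurePreserving_eval (fun _ => μ) i)
  have hint : ∀ j, Integrable (fun v : ι → X => f (v i) * w (v j)) (Measure.pi fun _ => μ) :=
    fun j => (integrable_comp_eval hw).bdd_mul hfi (ae_of_all _ fun v => hfC (v i))
  simp_rw [Finset.mul_sum]
  rw [integral_finsetSum E fun j _ => hint j, ← Finset.add_sum_erase E _ hi,
    integral_comp_eval (μ := fun _ => μ) (i := i) (f := fun y => f y * w y) (hf.mul hw.1),
    Finset.sum_congr rfl fun j hj => integral_mul_comp_eval_pi (Finset.ne_of_mem_erase hj).symm hf hw.1,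
    sum_const, card_erase_of_mem hi, nsmul_eq_mul, Nat.cast_sub (card_pos.mpr ⟨i, hi⟩), Nat.cast_one]

theorem integral_mul_add_sum_comp_eval_pi {E : Finset ι} {i : ι} (hi : i ∈ E) (a : ℝ)
    {f w : X → ℝ} {C : ℝ} (hf : AEStronglyMeasurable f μ) (hfC : ∀ y, ‖f y‖ ≤ C)
    (hw : Integrable w μ) :
    ∫ v, f (v i) * (a + ∑ j ∈ E, w (v j)) ∂Measure.pi (fun _ => μ)
      = ∫ y, f y * (a + w y + ((#E : ℝ) - 1) * ∫ z, w z ∂μ) ∂μ := by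
  have hfi : Integrable f μ := .of_bound hf C (ae_of_all _ hfC)
  have hfw : Integrable (fun y => f y * w y) μ := hw.bdd_mul hf (ae_of_all _ hfC)
  have hfsum : Integrable (fun v => f (v i) * ∑ j ∈ E, w (v j)) (Measure.pi fun _ => μ) :=
    (integrable_finsetSum E fun j _ => integrable_comp_eval hw).bdd_mul
      (hf.comp_measurePreserving (measurePreserving_eval (fun _ => μ) i))
      (ae_of_all _ fun v => hfC (v i))
  simp only [mul_add, mul_comm (f _) a]
  rw [integral_add ((integrable_comp_eval hfi).const_mul a) hfsum, integral_const_mul,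
    integral_comp_eval hf, integral_mul_sum_comp_eval_pi hi hf hfC hw,
    integral_add (f := fun y => a * f y + f y * w y) ((hfi.const_mul a).add hfw) (hfi.mul_const _),
    integral_add (hfi.const_mul a) hfw, integral_const_mul, integral_mul_const]
  ring

theorem integrable_div_add_sum_comp_eval_pi {E : Finset ι} {i : ι} (hi : i ∈ E) {a : ℝ}
    (ha : 0 ≤ a) {w G : X → ℝ} (hw : Measurable w) (hw0 : ∀ y, 0 ≤ w y) (hG : Measurable G)
    (hG0 : ∀ y, 0 ≤ G y) (hGw : ∀ y, G y ≤ w y) :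
    Integrable (fun v => G (v i) / (a + ∑ j ∈ E, w (v j))) (Measure.pi fun _ => μ) :=
  .div_of_nonneg_of_le (hG.comp (measurable_pi_apply i)) (by fun_prop) (fun v => hG0 (v i))
    fun v => by linarith [hGw (v i), single_le_sum (fun j _ => hw0 (v j)) hi]

theorem integral_div_add_mean_le_integral_div_add_sum {E : Finset ι} {i : ι} (hi : i ∈ E)
    {a : ℝ} (ha : 0 < a) {w G : X → ℝ} (hw : Measurable w) (hw0 : ∀ y, 0 ≤ w y)
    (hwi : Integrable w μ) (hG : Measurable G) (hG0 : ∀ y, 0 ≤ G y) (hGw : ∀ y, G y ≤ w y) :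
    ∫ y, G y / (a + w y + ((#E : ℝ) - 1) * ∫ z, w z ∂μ) ∂μ
      ≤ ∫ v, G (v i) / (a + ∑ j ∈ E, w (v j)) ∂Measure.pi (fun _ => μ) := by
  set c : X → ℝ := fun y => a + w y + ((#E : ℝ) - 1) * ∫ z, w z ∂μ
  set S : (ι → X) → ℝ := fun v => a + ∑ j ∈ E, w (v j)
  set H : X → ℝ := fun y => G y / c y ^ 2
  have hEL : 0 ≤ ((#E : ℝ) - 1) * ∫ z, w z ∂μ :=
    mul_nonneg (sub_nonneg.2 (by exact_mod_cast card_pos.mpr ⟨i, hi⟩)) (integral_nonneg hw0)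
  have hGc : ∀ y, G y ≤ c y := fun y => by linarith [hGw y, show c y = a + w y + _ from rfl]
  have hac : ∀ y, a ≤ c y := fun y => by linarith [hw0 y, show c y = a + w y + _ from rfl]
  have hc : ∀ y, 0 < c y := fun y => ha.trans_le (hac y)
  have hS : ∀ v, 0 < S v := fun v =>
    add_pos_of_pos_of_nonneg ha (sum_nonneg fun j _ => hw0 (v j))
  have hH : ∀ y, ‖H y‖ ≤ 1 / a := fun y => by
    rw [Real.norm_of_nonneg (div_nonneg (hG0 y) (sq_nonneg _))]
    calc G y / c y ^ 2 ≤ c y / c y ^ 2 := div_le_div_of_nonneg_right (hGc y) (sq_nonneg _)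
      _ = 1 / c y := by field_simp [(hc y).ne']
      _ ≤ 1 / a := one_div_le_one_div_of_le ha (hac y)
  have hHm : Measurable H := by fun_prop
  have hHS : ∫ v, H (v i) * S v ∂Measure.pi (fun _ => μ) = ∫ y, G y / c y ∂μ := by
    rw [integral_mul_add_sum_comp_eval_pi hi a hHm.aestronglyMeasurable hH hwi]
    refine integral_congr_ae (ae_of_all _ fun y => ?_)
    simp only [H]
    field_simp [(hc y).ne']
    rfl
  have hGci : Integrable (fun y => G y / c y) μ :=
    .div_of_nonneg_of_le hG (by fun_prop) hG0 hGc
  have hGci' : Integrable (fun v => 2 * (G (v i) / c (v i))) (Measure.pi fun _ => μ) :=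
    (integrable_comp_eval (μ := fun _ => μ) (i := i) hGci).const_mul 2
  have hHSi : Integrable (fun v => H (v i) * S v) (Measure.pi fun _ => μ) :=
    ((integrable_const a).add (integrable_finsetSum E fun j _ => integrable_comp_eval hwi)).bdd_mul
      (hHm.comp (measurable_pi_apply i)).aestronglyMeasurable (ae_of_all _ fun v => hH (v i))
  -- `c (v i)` is the conditional mean of `S` given `v i`: compare `1 / S` with the tangent line
  -- of `s ↦ 1 / s` at that point.
  calc ∫ y, G y / c y ∂μ
      = ∫ v, (2 * (G (v i) / c (v i)) - H (v i) * S v) ∂Measure.pi (fun _ => μ) := by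
        rw [integral_sub hGci' hHSi, integral_const_mul, hHS,
          integral_comp_eval (μ := fun _ => μ) (i := i) (f := fun y => G y / c y) hGci.1]
        ring
    _ ≤ ∫ v, G (v i) / S v ∂Measure.pi (fun _ => μ) :=
        integral_mono (hGci'.sub hHSi)
          (integrable_div_add_sum_comp_eval_pi hi ha.le hw hw0 hG hG0 hGw)
          fun v => two_mul_div_sub_div_sq_mul_le_div (hG0 (v i)) (hc (v i)) (hS v)

theorem setIntegral_div_le_integral_indicator_div_add_sum {E : Finset ι} {i : ι} (hi : i ∈ E)
    {a M : ℝ} (ha : 0 < a) {w : X → ℝ} (hw : Measurable w) (hw0 : ∀ y, 0 ≤ w y)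
    (hwi : Integrable w μ) {A : Set X} (hA : MeasurableSet A)
    (hM : ∀ y, a + w y + ((#E : ℝ) - 1) * ∫ z, w z ∂μ ≤ M) :
    (∫ y in A, w y ∂μ) / M
      ≤ ∫ v, A.indicator w (v i) / (a + ∑ j ∈ E, w (v j)) ∂Measure.pi (fun _ => μ) := by
  have hG0 : ∀ y, 0 ≤ A.indicator w y := fun y => Set.indicator_nonneg (fun y _ => hw0 y) y
  have hGw : ∀ y, A.indicator w y ≤ w y := fun y => Set.indicator_le_self' (fun y _ => hw0 y) y
  have hEL : 0 ≤ ((#E : ℝ) - 1) * ∫ z, w z ∂μ :=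
    mul_nonneg (sub_nonneg.2 (by exact_mod_cast card_pos.mpr ⟨i, hi⟩)) (integral_nonneg hw0)
  have hc : ∀ y, 0 < a + w y + ((#E : ℝ) - 1) * ∫ z, w z ∂μ := fun y => by linarith [hw0 y]
  calc (∫ y in A, w y ∂μ) / M = ∫ y, A.indicator w y / M ∂μ := by
        rw [integral_div, integral_indicator hA]
    _ ≤ ∫ y, A.indicator w y / (a + w y + ((#E : ℝ) - 1) * ∫ z, w z ∂μ) ∂μ :=
        integral_mono_of_nonneg (ae_of_all _ fun y => div_nonneg (hG0 y) ((hc y).le.trans (hM y)))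
          (.div_of_nonneg_of_le (hw.indicator hA) (by fun_prop) hG0 fun y => by
            linarith [hGw y, hw0 y])
          (ae_of_all _ fun y => div_le_div_of_nonneg_left (hG0 y) (hc y) (hM y))
    _ ≤ _ := integral_div_add_mean_le_integral_div_add_sum hi ha hw hw0 hwi (hw.indicator hA)
        hG0 hGw

theorem sum_integral_indicator_div_le_integral_sum_update [DecidableEq ι] {w : X → ℝ}
    (hw : Measurable w) (hw0 : ∀ x, 0 ≤ w x) {A : Set X} (hA : MeasurableSet A) (k : ι) (x₀ : X) :
    ∑ i ∈ univ.erase k, ∫ v, A.indicator w (v i) / (w x₀ + ∑ j ∈ univ.erase k, w (v j))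
        ∂Measure.pi (fun _ => μ)
      ≤ ∫ v, ∑ i, (w (Function.update v k x₀ i) / ∑ j, w (Function.update v k x₀ j)) *
          A.indicator (fun _ => (1 : ℝ)) (Function.update v k x₀ i) ∂Measure.pi (fun _ => μ) := by
  have hterm : ∀ i ∈ univ.erase k, Integrable
      (fun v => A.indicator w (v i) / (w x₀ + ∑ j ∈ univ.erase k, w (v j)))
      (Measure.pi fun _ => μ) := fun i hi =>
    integrable_div_add_sum_comp_eval_pi hi (hw0 x₀) hw hw0 (hw.indicator hA)
      (fun y => Set.indicator_nonneg (fun y _ => hw0 y) y)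
      (fun y => Set.indicator_le_self' (fun y _ => hw0 y) y)
  have hind : Measurable (A.indicator fun _ => (1 : ℝ)) := measurable_const.indicator hA
  rw [← integral_finsetSum _ hterm]
  exact integral_mono (integrable_finsetSum _ hterm) (.of_bound (by fun_prop) 1
      (ae_of_all _ fun v => norm_sum_div_sum_mul_le_one (fun i => hw0 _)
        (fun i => Set.indicator_nonneg (fun _ _ => zero_le_one) _)
        (fun i => Set.indicator_le_self' (fun _ _ => zero_le_one) _)))
    fun v => sum_erase_indicator_div_le_sum_update hw0 A v k x₀

end ProductSpace

/-- Uniform minorization for the i-SIR kernel: `P_N(x, A) ≥ ε_N π(A)` with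
`ε_N = (N−1)/(2ω + N − 2)`, where `π(dy) = w(y) λ(dy) / λ(w)`. -/
theorem isir_minorization
    {X : Type*} [MeasurableSpace X] (lam : Measure X) [IsProbabilityMeasure lam]
    (w : X → ℝ) (hwm : Measurable w) (hw0 : ∀ x, 0 < w x) (hwint : Integrable w lam)
    (omg : ℝ) (homg : ∀ x, w x ≤ omg * ∫ z, w z ∂lam)
    (N : ℕ) (hN : 2 ≤ N) (x₀ : X) (A : Set X) (hA : MeasurableSet A) :
    ((N : ℝ) - 1) / (2 * omg + N - 2) * ((∫ y in A, w y ∂lam) / ∫ z, w z ∂lam)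
      ≤ ∫ v : Fin N → X,
          ∑ i, (w (Function.update v (⟨0, Nat.lt_of_lt_of_le Nat.zero_lt_two hN⟩ : Fin N) x₀ i) / ∑ j, w (Function.update v (⟨0, Nat.lt_of_lt_of_le Nat.zero_lt_two hN⟩ : Fin N) x₀ j)) *
            Set.indicator A (fun _ => (1 : ℝ)) (Function.update v (⟨0, Nat.lt_of_lt_of_le Nat.zero_lt_two hN⟩ : Fin N) x₀ i)
          ∂(Measure.pi fun _ => lam) := by
  set k : Fin N := ⟨0, Nat.lt_of_lt_of_le Nat.zero_lt_two hN⟩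
  set L := ∫ z, w z ∂lam
  have hw_nonneg : ∀ x, 0 ≤ w x := fun x => (hw0 x).le
  have hE : (#(univ.erase k) : ℝ) = N - 1 := by
    rw [card_erase_of_mem (mem_univ _), card_univ, Fintype.card_fin, Nat.cast_sub (by omega),
      Nat.cast_one]
  have hmean : ∀ y, w x₀ + w y + ((#(univ.erase k) : ℝ) - 1) * L ≤ (2 * omg + N - 2) * L :=
    fun y => by rw [hE]; linarith [homg x₀, homg y]
  calc ((N : ℝ) - 1) / (2 * omg + N - 2) * ((∫ y in A, w y ∂lam) / L)
      = ∑ i ∈ univ.erase k, (∫ y in A, w y ∂lam) / ((2 * omg + N - 2) * L) := by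
        rw [sum_const, nsmul_eq_mul, hE, div_mul_div_comm, mul_div_assoc]
    _ ≤ _ := sum_le_sum fun i hi =>
        setIntegral_div_le_integral_indicator_div_add_sum hi (hw0 x₀) hwm hw_nonneg hwint hA hmean
    _ ≤ _ := sum_integral_indicator_div_le_integral_sum_update hwm hw_nonneg hA k x₀
end

section
/- Total variation contraction from minorization: if a Markov kernel P on (X,𝒳) and a probability measure π satisfy P(x, A) ≥ ε·π(A) for all x and A, with ε ∈ (0,1], and π is P-invariant, then for every x and k ≥ 0, the total variation distance between Pᵏ(x,·) and π is at most (1 − ε)ᵏ. -/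
/-!
Doeblin's argument. Write `μₖ` for the law of the chain after `k` steps. If `μₖ ≥ c • π`, split
`μₖ = (μₖ - c • π) + c • π`: the minorization bounds the image of the first part below by
`ε (1 - c) • π`, and invariance maps the second part to itself, so `μₖ₊₁ ≥ (c + ε (1 - c)) • π`.
Starting from `c = 0` this gives `μₖ ≥ (1 - (1 - ε)ᵏ) • π`, and a probability measure dominating
`c` times another one is within total variation `1 - c` of it.
-/

open MeasureTheory ProbabilityTheory Set

namespace MeasureTheory.Measure

variable {X : Type*} [MeasurableSpace X]

lemma smul_le_comp_of_forall_smul_le {Y : Type*} [MeasurableSpace Y] {κ : Kernel X Y}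
    {π : Measure Y} {c : ENNReal} (h : ∀ x, c • π ≤ κ x) (μ : Measure X) :
    (μ univ * c) • π ≤ κ ∘ₘ μ := by
  refine le_iff.2 fun s hs => ?_
  rw [bind_apply hs κ.aemeasurable]
  calc ((μ univ * c) • π) s = ∫⁻ _, c * π s ∂μ := by
        simp only [smul_apply, smul_eq_mul, lintegral_const]
        ring
    _ ≤ ∫⁻ x, κ x s ∂μ := lintegral_mono fun x => h x s

lemma isProbabilityMeasure_iterate_comp (P : Kernel X X) [IsMarkovKernel P]
    (μ : Measure X) [IsProbabilityMeasure μ] (k : ℕ) :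
    IsProbabilityMeasure ((fun ν : Measure X => P ∘ₘ ν)^[k] μ) := by
  induction k with
  | zero => assumption
  | succ k ih => rw [Function.iterate_succ_apply']; infer_instance

lemma abs_measureReal_sub_le_of_smul_le {μ ν : Measure X} [IsProbabilityMeasure μ]
    [IsProbabilityMeasure ν] {c : ℝ} (hc : 0 ≤ c) (h : ENNReal.ofReal c • ν ≤ μ)
    {A : Set X} (hA : MeasurableSet A) :
    |μ.real A - ν.real A| ≤ 1 - c := by
  have hdom : ∀ s, c * ν.real s ≤ μ.real s := fun s => by
    simpa [measureReal_def, ENNReal.toReal_mul, ENNReal.toReal_ofReal hc] using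
      ENNReal.toReal_mono (measure_ne_top μ s) (h s)
  have hc1 : c ≤ 1 := by simpa using hdom univ
  have hA_dom := hdom A
  have hAc_dom := hdom Aᶜ
  rw [probReal_compl_eq_one_sub hA, probReal_compl_eq_one_sub hA] at hAc_dom
  have hμA : μ.real A ≤ 1 := measureReal_le_one
  have hνA : ν.real A ≤ 1 := measureReal_le_one
  -- `A` gives `ν A - μ A ≤ (1 - c) ν A`, and `Aᶜ` gives `μ A - ν A ≤ (1 - c) (1 - ν A)`.
  rw [abs_le]
  constructor <;> nlinarith [measureReal_nonneg (μ := ν) (s := A)]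

section Minorization

variable {P : Kernel X X} {π : Measure X} [IsProbabilityMeasure π] {ε : ℝ}

lemma ofReal_smul_le_comp_of_minorization (hε : 0 ≤ ε)
    (hminor : ∀ x, ENNReal.ofReal ε • π ≤ P x) (hinv : P ∘ₘ π = π)
    {μ : Measure X} [IsProbabilityMeasure μ] {c : ℝ} (hc0 : 0 ≤ c) (hc1 : c ≤ 1)
    (hμ : ENNReal.ofReal c • π ≤ μ) :
    ENNReal.ofReal (c + ε * (1 - c)) • π ≤ P ∘ₘ μ := by
  have : IsFiniteMeasure (ENNReal.ofReal c • π) := π.smul_finite ENNReal.ofReal_ne_top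
  set ν := μ - ENNReal.ofReal c • π
  have hsplit : ν + ENNReal.ofReal c • π = μ := sub_add_cancel_of_le hμ
  have hν : ν univ = ENNReal.ofReal (1 - c) := by
    rw [sub_apply .univ hμ]
    simp [ENNReal.ofReal_sub 1 hc0]
  calc ENNReal.ofReal (c + ε * (1 - c)) • π
      = (ν univ * ENNReal.ofReal ε) • π + ENNReal.ofReal c • π := by
        rw [hν, ← ENNReal.ofReal_mul (by linarith), ← add_smul,
          ← ENNReal.ofReal_add (by nlinarith) hc0, mul_comm, add_comm]
    _ ≤ P ∘ₘ ν + ENNReal.ofReal c • (P ∘ₘ π) := by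
        rw [hinv]
        gcongr
        exact smul_le_comp_of_forall_smul_le hminor ν
    _ = P ∘ₘ μ := by rw [← comp_smul, ← comp_add, hsplit]

lemma ofReal_smul_le_iterate_comp_of_minorization [IsMarkovKernel P]
    (hε0 : 0 ≤ ε) (hε1 : ε ≤ 1) (hminor : ∀ x, ENNReal.ofReal ε • π ≤ P x)
    (hinv : P ∘ₘ π = π) (μ : Measure X) [IsProbabilityMeasure μ] (k : ℕ) :
    ENNReal.ofReal (1 - (1 - ε) ^ k) • π ≤ (fun ν : Measure X => P ∘ₘ ν)^[k] μ := by
  induction k with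
  | zero => simpa using Measure.zero_le μ
  | succ k ih =>
    have := isProbabilityMeasure_iterate_comp P μ k
    have hpow : 0 ≤ (1 - ε) ^ k := pow_nonneg (by linarith) k
    have hpow1 : (1 - ε) ^ k ≤ 1 := pow_le_one₀ (by linarith) (by linarith)
    rw [Function.iterate_succ_apply']
    convert ofReal_smul_le_comp_of_minorization hε0 hminor hinv
      (by linarith) (by linarith) ih using 3
    ring

end Minorization

end MeasureTheory.Measure

/-- Total variation contraction from a uniform minorization: if `P(x, ·) ≥ ε π` for a
`P`-invariant probability `π`, then `‖Pᵏ(x,·) − π‖_TV ≤ (1 − ε)ᵏ`. -/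
theorem tv_contraction_from_minorization
    {X : Type*} [MeasurableSpace X] (P : Kernel X X) [IsMarkovKernel P]
    (π : Measure X) [IsProbabilityMeasure π]
    (ε : ℝ) (hε0 : 0 < ε) (hε1 : ε ≤ 1)
    (hminor : ∀ x A, MeasurableSet A → ENNReal.ofReal ε * π A ≤ P x A)
    (hinv : π.bind (fun x => P x) = π)
    (x : X) (k : ℕ) (A : Set X) (hA : MeasurableSet A) :
    |(((fun μ : Measure X => μ.bind (fun z => P z))^[k] (Measure.dirac x)) A).toReal
      - (π A).toReal| ≤ (1 - ε) ^ k := by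
  have hminor' : ∀ z, ENNReal.ofReal ε • π ≤ P z := fun z =>
    Measure.le_iff.2 fun A hA => hminor z A hA
  have := Measure.isProbabilityMeasure_iterate_comp P (Measure.dirac x) k
  have hdom := Measure.ofReal_smul_le_iterate_comp_of_minorization hε0.le hε1 hminor' hinv
    (Measure.dirac x) k
  have hpow : 0 ≤ 1 - (1 - ε) ^ k := by
    linarith [pow_le_one₀ (n := k) (by linarith : 0 ≤ 1 - ε) (by linarith)]
  have htv := Measure.abs_measureReal_sub_le_of_smul_le hpow hdom hA
  rwa [sub_sub_cancel] at htv
end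

section
/- Bias bound for the conditional SNIS mean: under ω = sup w/λ(w) < ∞ and N ≥ 2, for any bounded measurable f with ‖f‖_∞ ≤ 1 and any y ∈ X, |a_N(y)/b_N(y) − π(f)| ≤ (2/N)(1 + ω), where a_N(y) = (1−1/N)λ(wf) + N⁻¹w(y)f(y), b_N(y) = (1−1/N)λ(w) + N⁻¹w(y), and π(f) = λ(wf)/λ(w). -/
open MeasureTheory

/-- Bias bound for the conditional SNIS mean: `|a_N(y)/b_N(y) − π(f)| ≤ (2/N)(1 + ω)`. -/
theorem conditional_snis_bias_bound
    {X : Type*} [MeasurableSpace X] (lam : Measure X) [IsProbabilityMeasure lam]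
    (w f : X → ℝ) (hwm : Measurable w) (hw0 : ∀ x, 0 < w x)
    (hwint : Integrable w lam) (hfm : Measurable f) (hf1 : ∀ x, |f x| ≤ 1)
    (hfint : Integrable (fun z => w z * f z) lam)
    (omg : ℝ) (homg : ∀ x, w x ≤ omg * ∫ z, w z ∂lam)
    (N : ℕ) (hN : 2 ≤ N) (y : X) :
    |((1 - 1 / N) * (∫ z, w z * f z ∂lam) + (N : ℝ)⁻¹ * (w y * f y)) /
        ((1 - 1 / N) * (∫ z, w z ∂lam) + (N : ℝ)⁻¹ * w y)
      - (∫ z, w z * f z ∂lam) / (∫ z, w z ∂lam)|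
      ≤ (2 / N) * (1 + omg) := by
  set d : ℝ := ∫ z, w z ∂lam with hd_def
  set c : ℝ := ∫ z, w z * f z ∂lam with hc_def
  have hNpos : (0:ℝ) < N := by positivity
  have hd : 0 < d := by
    rw [hd_def]
    refine (integral_pos_iff_support_of_nonneg (fun x => (hw0 x).le) hwint).2 ?_
    have : Function.support w = Set.univ := by
      ext x; simp [Function.support, (hw0 x).ne']
    simp [this]
  have hcd : |c| ≤ d := by
    rw [hc_def, hd_def]
    calc |∫ z, w z * f z ∂lam| ≤ ∫ z, |w z * f z| ∂lam := by
          have := norm_integral_le_integral_norm (μ := lam) (fun z => w z * f z)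
          simp only [Real.norm_eq_abs] at this
          exact this
      _ ≤ ∫ z, w z ∂lam := by
          refine integral_mono hfint.abs hwint (fun x => ?_)
          rw [abs_mul, abs_of_pos (hw0 x)]
          nlinarith [hf1 x, (hw0 x).le, abs_nonneg (f x)]
  have hwy : 0 < w y := hw0 y
  have hNinv : (0:ℝ) < (N:ℝ)⁻¹ := by positivity
  have h1N : (0:ℝ) < 1 - 1 / N := by
    have : (1:ℝ)/N ≤ 1/2 := by
      apply div_le_div_of_nonneg_left (by norm_num) (by norm_num)
      exact_mod_cast hN
    linarith
  set a : ℝ := (1 - 1 / N) * c + (N : ℝ)⁻¹ * (w y * f y) with ha_def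
  set b : ℝ := (1 - 1 / N) * d + (N : ℝ)⁻¹ * w y with hb_def
  have hb : 0 < b := by positivity
  have habs : |a| ≤ b := by
    rw [ha_def, hb_def]
    calc |(1 - 1 / N) * c + (N : ℝ)⁻¹ * (w y * f y)|
        ≤ |(1 - 1 / N) * c| + |(N : ℝ)⁻¹ * (w y * f y)| := abs_add_le _ _
      _ ≤ (1 - 1 / N) * d + (N : ℝ)⁻¹ * w y := by
          rw [abs_mul, abs_mul, abs_mul, abs_of_pos h1N, abs_of_pos hNinv,
            abs_of_pos hwy]
          have := hf1 y
          have hwyle : w y * |f y| ≤ w y * 1 := by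
            apply mul_le_mul_of_nonneg_left this hwy.le
          nlinarith [h1N.le, hNinv.le, hcd]
  have hab1 : |a / b| ≤ 1 := by
    rw [abs_div, abs_of_pos hb, div_le_one hb]; exact habs
  have key : a / b - c / d = (a / b) * ((d - b) / d) + (a - c) / d := by
    field_simp
    ring
  have hdb : |d - b| ≤ ((N:ℝ)⁻¹) * ((1 + omg) * d) := by
    have : d - b = (N:ℝ)⁻¹ * (d - w y) := by
      rw [hb_def]; field_simp; ring
    rw [this, abs_mul, abs_of_pos hNinv]
    apply mul_le_mul_of_nonneg_left _ hNinv.le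
    have h1 := homg y
    rw [abs_le]; constructor <;> nlinarith [hwy, hd]
  have hac : |a - c| ≤ ((N:ℝ)⁻¹) * ((1 + omg) * d) := by
    have : a - c = (N:ℝ)⁻¹ * (w y * f y - c) := by
      rw [ha_def]; field_simp; ring
    rw [this, abs_mul, abs_of_pos hNinv]
    apply mul_le_mul_of_nonneg_left _ hNinv.le
    have h1 := homg y
    have h2 : |w y * f y| ≤ w y := by
      rw [abs_mul, abs_of_pos hwy]
      nlinarith [hf1 y, hwy.le, abs_nonneg (f y)]
    calc |w y * f y - c| ≤ |w y * f y| + |c| := abs_sub _ _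
      _ ≤ (1 + omg) * d := by
          have he : (1 + omg) * d = d + omg * d := by ring
          rw [he]; linarith
  calc |a / b - c / d| = |(a / b) * ((d - b) / d) + (a - c) / d| := by rw [key]
    _ ≤ |(a / b) * ((d - b) / d)| + |(a - c) / d| := abs_add_le _ _
    _ ≤ |d - b| / d + |a - c| / d := by
        have h2 : |(a - c) / d| = |a - c| / d := by rw [abs_div, abs_of_pos hd]
        have h3 : |(a / b) * ((d - b) / d)| ≤ |d - b| / d := by
          rw [abs_mul]
          calc |a / b| * |(d - b) / d| ≤ 1 * |(d - b) / d| :=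
                mul_le_mul_of_nonneg_right hab1 (abs_nonneg _)
            _ = |d - b| / d := by rw [one_mul, abs_div, abs_of_pos hd]
        linarith
    _ ≤ ((N:ℝ)⁻¹) * ((1 + omg) * d) / d + ((N:ℝ)⁻¹) * ((1 + omg) * d) / d := by
        gcongr
    _ = (2 / N) * (1 + omg) := by
        have hdd : (1 + omg) * d / d = 1 + omg := mul_div_cancel_right₀ _ hd.ne'
        rw [mul_div_assoc, hdd]
        ring
end

section
/- Reversibility of the i-SIR marginal kernel: let π(dy)Λ_N(y, dx¹:ᴺ) = 𝛑_N(dx¹:ᴺ)Φ_N(x¹:ᴺ, dy) (the duality identity). Then the kernel P_N = Λ_N Φ_N on X satisfies the detailed balance relation ∫∫ g(y)h(ȳ) π(dy) P_N(y, dȳ) = ∫∫ g(y)h(ȳ) π(dȳ) P_N(ȳ, dy) for all nonnegative measurable g, h; in particular π is P_N-invariant. -/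
/-!
Write `P = η ∘ₖ κ`. Disintegrating `μ ⊗ₘ κ` and transporting it through the duality
`μ ⊗ₘ κ = swap_* (ν ⊗ₘ η)` turns `∫ g(y) ∫ h dP(y) dμ(y)` into `∫ (∫ g dη(x)) (∫ h dη(x)) dν(x)`,
which is symmetric in `g` and `h`. Exchanging `g` and `h` is detailed balance; taking indicators
gives detailed balance on sets, which forces invariance of `μ`.
-/

open MeasureTheory ProbabilityTheory
open scoped ENNReal

namespace ProbabilityTheory.Kernel

variable {α β : Type*} [MeasurableSpace α] [MeasurableSpace β]
  {μ : Measure α} {ν : Measure β} {κ : Kernel α β} {η : Kernel β α}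
  {g h : α → ℝ≥0∞}

theorem lintegral_mul_lintegral_comp_eq_lintegral_compProd [SFinite μ] [IsSFiniteKernel κ]
    (hg : Measurable g) (hh : Measurable h) :
    ∫⁻ a, g a * ∫⁻ a', h a' ∂(η ∘ₖ κ) a ∂μ
      = ∫⁻ p, g p.1 * ∫⁻ a', h a' ∂η p.2 ∂(μ ⊗ₘ κ) := by
  have hηh : Measurable fun b => ∫⁻ a', h a' ∂η b := hh.lintegral_kernel
  have hf : Measurable fun p : α × β => g p.1 * ∫⁻ a', h a' ∂η p.2 := by fun_prop
  rw [Measure.lintegral_compProd hf]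
  simp_rw [lintegral_comp _ _ _ hh, lintegral_const_mul _ hηh]

variable [SFinite μ] [SFinite ν] [IsSFiniteKernel κ] [IsSFiniteKernel η]

theorem lintegral_mul_lintegral_comp_of_compProd_eq_map_swap
    (hdual : μ ⊗ₘ κ = (ν ⊗ₘ η).map Prod.swap) (hg : Measurable g) (hh : Measurable h) :
    ∫⁻ a, g a * ∫⁻ a', h a' ∂(η ∘ₖ κ) a ∂μ
      = ∫⁻ b, (∫⁻ a, g a ∂η b) * ∫⁻ a, h a ∂η b ∂ν := by
  have hηh : Measurable fun b => ∫⁻ a', h a' ∂η b := hh.lintegral_kernel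
  have hf : Measurable fun p : α × β => g p.1 * ∫⁻ a', h a' ∂η p.2 := by fun_prop
  have hf_swap : Measurable fun q : β × α => g q.2 * ∫⁻ a', h a' ∂η q.1 := by fun_prop
  rw [lintegral_mul_lintegral_comp_eq_lintegral_compProd hg hh, hdual,
    MeasureTheory.lintegral_map hf measurable_swap]
  simp only [Prod.fst_swap, Prod.snd_swap]
  rw [Measure.lintegral_compProd hf_swap]
  simp_rw [lintegral_mul_const _ hg]

theorem lintegral_mul_lintegral_comp_symm_of_compProd_eq_map_swap
    (hdual : μ ⊗ₘ κ = (ν ⊗ₘ η).map Prod.swap) (hg : Measurable g) (hh : Measurable h) :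
    ∫⁻ a, g a * ∫⁻ a', h a' ∂(η ∘ₖ κ) a ∂μ
      = ∫⁻ a', (∫⁻ a, g a ∂(η ∘ₖ κ) a') * h a' ∂μ := by
  simp_rw [mul_comm _ (h _)]
  rw [lintegral_mul_lintegral_comp_of_compProd_eq_map_swap hdual hg hh,
    lintegral_mul_lintegral_comp_of_compProd_eq_map_swap hdual hh hg]
  simp_rw [mul_comm]

theorem isReversible_comp_of_compProd_eq_map_swap (hdual : μ ⊗ₘ κ = (ν ⊗ₘ η).map Prod.swap) :
    IsReversible (η ∘ₖ κ) μ := by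
  intro A B hA hB
  have h_indicator : ∀ {S T : Set α}, MeasurableSet S → MeasurableSet T →
      ∫⁻ a in S, (η ∘ₖ κ) a T ∂μ
        = ∫⁻ a, S.indicator 1 a * ∫⁻ a', T.indicator 1 a' ∂(η ∘ₖ κ) a ∂μ := by
    intro S T hS hT
    rw [← lintegral_indicator hS]
    refine lintegral_congr fun a => ?_
    by_cases ha : a ∈ S <;> simp [ha, lintegral_indicator_one hT]
  rw [h_indicator hA hB, h_indicator hB hA,
    lintegral_mul_lintegral_comp_symm_of_compProd_eq_map_swap hdual
      (measurable_one.indicator hA) (measurable_one.indicator hB)]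
  simp_rw [mul_comm]

end ProbabilityTheory.Kernel

open ProbabilityTheory.Kernel in
/-- Reversibility of the i-SIR marginal kernel `P_N = Φ_N ∘ Λ_N` w.r.t. `π`, given
the duality identity `π ⊗ Λ_N = swap_*(𝛑_N ⊗ Φ_N)`, and invariance of `π`. -/
theorem isir_reversibility
    {X : Type*} [MeasurableSpace X] (N : ℕ)
    (π : Measure X) [IsProbabilityMeasure π]
    (πN : Measure (Fin N → X)) [IsProbabilityMeasure πN]
    (Λ : Kernel X (Fin N → X)) [IsMarkovKernel Λ]
    (Φ : Kernel (Fin N → X) X) [IsMarkovKernel Φ]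
    (hdual : π.compProd Λ = (πN.compProd Φ).map Prod.swap) :
    (∀ g h : X → ℝ≥0∞, Measurable g → Measurable h →
        ∫⁻ y, g y * ∫⁻ yb, h yb ∂((Φ ∘ₖ Λ) y) ∂π
          = ∫⁻ yb, (∫⁻ y, g y ∂((Φ ∘ₖ Λ) yb)) * h yb ∂π) ∧
    π.bind (fun y => (Φ ∘ₖ Λ) y) = π :=
  ⟨fun _ _ hg hh => lintegral_mul_lintegral_comp_symm_of_compProd_eq_map_swap hdual hg hh,
    (isReversible_comp_of_compProd_eq_map_swap hdual).invariant⟩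
end

section
/- Invariance of the extended target under the i-SIR joint kernel: the kernel Q_N((y, x¹:ᴺ), d(ȳ, x̄¹:ᴺ)) = Λ_N(y, dx̄¹:ᴺ)Φ_N(x̄¹:ᴺ, dȳ) leaves invariant the measure 𝛗_N(d(y, x¹:ᴺ)) = π(dy)Λ_N(y, dx¹:ᴺ); i.e., ∫ 𝛗_N(d(y,x¹:ᴺ)) Q_N((y,x¹:ᴺ), A) = 𝛗_N(A) for all measurable A ⊆ X^{N+1}. -/
/-!
The joint kernel reads the current state `(y, x)` only through `y`, so integrating it against
`𝛗_N = π ⊗ Λ_N` amounts to drawing `x̄` from the marginal `π Λ_N` and then `ȳ ~ Φ_N(x̄, ·)`.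
By duality that marginal is `𝛑_N`, and duality once more identifies the law of `(ȳ, x̄)`,
the swap of `𝛑_N ⊗ Φ_N`, with `𝛗_N`.
-/

open MeasureTheory ProbabilityTheory

namespace MeasureTheory.Measure

variable {α β γ : Type*} {mα : MeasurableSpace α} {mβ : MeasurableSpace β}
  {mγ : MeasurableSpace γ}

lemma prodMkRight_comp_eq_comp_fst (η : Kernel α γ) (ρ : Measure (α × β)) :
    η.prodMkRight β ∘ₘ ρ = η ∘ₘ ρ.fst := by
  rw [Measure.fst, ← deterministic_comp_eq_map measurable_fst, comp_assoc,
    Kernel.comp_deterministic_eq_comap]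
  rfl

lemma map_swap_compProd (μ : Measure α) [SFinite μ] (κ : Kernel α β) [IsSFiniteKernel κ] :
    (μ ⊗ₘ κ).map Prod.swap = (κ ×ₖ Kernel.id) ∘ₘ μ := by
  rw [compProd_eq_comp_prod, map_comp _ _ measurable_swap, Kernel.map_prod_swap]

end MeasureTheory.Measure

namespace ProbabilityTheory.Kernel

variable {X Y : Type*} {mX : MeasurableSpace X} {mY : MeasurableSpace Y}

/-- The i-SIR joint kernel `Q_N((y, x), ·)`: draw a pool `x̄ ~ Λ(y, ·)`, then `ȳ ~ Φ(x̄, ·)`;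
the current pool `x` is discarded. -/
noncomputable def isir (Λ : Kernel X Y) (Φ : Kernel Y X) : Kernel (X × Y) (X × Y) :=
  ((Φ ×ₖ Kernel.id) ∘ₖ Λ).prodMkRight Y

lemma isir_apply (Λ : Kernel X Y) (Φ : Kernel Y X) [IsSFiniteKernel Φ] (p : X × Y) :
    isir Λ Φ p = (Λ p.1).bind (fun xb => (Φ xb).map (fun yb => (yb, xb))) := by
  rw [isir, prodMkRight_apply, comp_apply]
  congr 1 with xb : 1
  rw [prod_apply, id_apply, Measure.prod_dirac]

theorem isir_comp_compProd (π : Measure X) [SFinite π] (πN : Measure Y) [SFinite πN]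
    (Λ : Kernel X Y) [IsMarkovKernel Λ] (Φ : Kernel Y X) [IsMarkovKernel Φ]
    (hdual : π ⊗ₘ Λ = (πN ⊗ₘ Φ).map Prod.swap) :
    isir Λ Φ ∘ₘ (π ⊗ₘ Λ) = π ⊗ₘ Λ := by
  have hmarginal : Λ ∘ₘ π = πN := by
    rw [← Measure.snd_compProd, hdual, Measure.snd_map_swap, Measure.fst_compProd]
  calc isir Λ Φ ∘ₘ (π ⊗ₘ Λ) = (Φ ×ₖ Kernel.id) ∘ₘ (Λ ∘ₘ π) := by
        rw [isir, Measure.prodMkRight_comp_eq_comp_fst, Measure.fst_compProd, Measure.comp_assoc]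
    _ = π ⊗ₘ Λ := by rw [hmarginal, ← Measure.map_swap_compProd, hdual]

end ProbabilityTheory.Kernel

/-- Invariance of the extended target `𝛗_N = π ⊗ Λ_N` under the i-SIR joint kernel
`Q_N((y, x), ·) = Λ_N(y, dx̄) Φ_N(x̄, dȳ)`, given the duality identity. -/
theorem isir_joint_invariance
    {X : Type*} [MeasurableSpace X] (N : ℕ)
    (π : Measure X) [IsProbabilityMeasure π]
    (πN : Measure (Fin N → X)) [IsProbabilityMeasure πN]
    (Λ : Kernel X (Fin N → X)) [IsMarkovKernel Λ]
    (Φ : Kernel (Fin N → X) X) [IsMarkovKernel Φ]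
    (hdual : π.compProd Λ = (πN.compProd Φ).map Prod.swap) :
    (π.compProd Λ).bind
        (fun p => (Λ p.1).bind (fun xb => (Φ xb).map (fun yb => (yb, xb))))
      = π.compProd Λ := by
  simpa only [← Kernel.isir_apply] using Kernel.isir_comp_compProd π πN Λ Φ hdual
end
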